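/- arXiv:1405.7663 — 11 statements merged into one kernel-verified Lean document; each statement's English description precedes it below -/
import Mathlib

section
/- If F(0)=0, G(0)=0, and for all t the discrete recursion F((i+1)Δt)=F(iΔt)+δ(iΔt)Δt and G((i+1)Δt)=min{F((i+1)Δt), G(iΔt)+σ(iΔt)Δt} holds, then for all i, G(iΔt) = min over 0≤j≤i of {F(jΔt) − S(jΔt)} + S(iΔt), where S(iΔt)=Σ_{j=0}^{i-1} σ(jΔt)Δt. -/
/-- Discrete Vickrey point queue: min-plus formula for cumulative outflow. -/
theorem stmt_0 (Δt : ℝ) (hΔt : 0 < Δt) (δ σ : ℕ → ℝ)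
    (hδ : ∀ i, 0 ≤ δ i) (hσ : ∀ i, 0 ≤ σ i)
    (F G : ℕ → ℝ) (hF0 : F 0 = 0) (hG0 : G 0 = 0)
    (hF : ∀ i, F (i + 1) = F i + δ i * Δt)
    (hG : ∀ i, G (i + 1) = min (F (i + 1)) (G i + σ i * Δt))
    (S : ℕ → ℝ) (hS : ∀ i, S i = ∑ j ∈ Finset.range i, σ j * Δt) :
    ∀ i, G i = Finset.inf' (Finset.range (i + 1)) (by simp)
      (fun j => F j - S j) + S i := by
  intro i
  induction i with
  | zero => simp [hG0, hF0, hS]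
  | succ i ih =>
    have hSsucc : S (i + 1) = S i + σ i * Δt := by
      simp [hS, Finset.sum_range_succ]
    have hins : Finset.range (i + 2) = insert (i + 1) (Finset.range (i + 1)) := by
      rw [Finset.range_add_one]
    have hinf : Finset.inf' (Finset.range (i + 2)) (by simp)
        (fun j => F j - S j)
        = min (F (i + 1) - S (i + 1))
          (Finset.inf' (Finset.range (i + 1)) (by simp) (fun j => F j - S j)) := by
      simp only [hins]
      exact Finset.inf'_insert _ _
    rw [hG i, ih, hinf, hSsucc]
    rw [← min_add_add_right, sub_add_cancel, add_assoc]
end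

section
/- For the discrete point queue model update λ' = min{δΔt+λ, σΔt+Λ} − min{δΔt+λ, σΔt} (PQM1-D), if 0 ≤ λ ≤ Λ, δ ≥ 0, σ ≥ 0, and Δt > 0, then 0 ≤ λ' ≤ Λ. -/
/-- PQM1-D is well-defined: the update maps [0,Λ] into [0,Λ]. -/
theorem stmt_1 (Λ lam δ σ Δt : ℝ) (hΛ : 0 < Λ)
    (hlam0 : 0 ≤ lam) (hlamΛ : lam ≤ Λ) (hδ : 0 ≤ δ) (hσ : 0 ≤ σ) (hΔt : 0 < Δt) :
    0 ≤ min (δ * Δt + lam) (σ * Δt + Λ) - min (δ * Δt + lam) (σ * Δt) ∧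
    min (δ * Δt + lam) (σ * Δt + Λ) - min (δ * Δt + lam) (σ * Δt) ≤ Λ := by
  constructor
  · rcases le_total (δ * Δt + lam) (σ * Δt) with h | h
    · simp [min_eq_left h, min_eq_left (by linarith : δ * Δt + lam ≤ σ * Δt + Λ)]
    · have : min (δ * Δt + lam) (σ * Δt) = σ * Δt := min_eq_right h
      rw [this]
      have : σ * Δt ≤ min (δ * Δt + lam) (σ * Δt + Λ) := le_min h (by linarith)
      linarith
  · have h1 : min (δ * Δt + lam) (σ * Δt + Λ) ≤ σ * Δt + Λ := min_le_right _ _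
    have h2 : σ * Δt ≤ min (δ * Δt + lam) (σ * Δt) ∨ δ * Δt + lam ≤ min (δ * Δt + lam) (σ * Δt) := by
      rcases le_total (δ * Δt + lam) (σ * Δt) with h | h
      · right; simp [min_eq_left h]
      · left; simp [min_eq_right h]
    rcases h2 with h2 | h2
    · linarith
    · have := min_le_left (δ * Δt + lam) (σ * Δt + Λ); linarith
end

section
/- For the discrete point queue model update λ' = min{δΔt+λ, Λ} − min{δΔt+λ, σΔt} (PQM3-D, Moran's dam model), the update maps [0,Λ] into [0,Λ] for all λ ∈ [0,Λ] and all δ ≥ 0 if and only if σΔt ≤ Λ. -/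
/-- PQM3-D (Moran's dam model) is well-defined iff σΔt ≤ Λ. -/
theorem stmt_3 (Λ σ Δt : ℝ) (hΛ : 0 < Λ) (hσ : 0 ≤ σ) (hΔt : 0 < Δt) :
    (∀ lam δ : ℝ, 0 ≤ lam → lam ≤ Λ → 0 ≤ δ →
      0 ≤ min (δ * Δt + lam) Λ - min (δ * Δt + lam) (σ * Δt) ∧
      min (δ * Δt + lam) Λ - min (δ * Δt + lam) (σ * Δt) ≤ Λ)
    ↔ σ * Δt ≤ Λ := by
  constructor
  · intro h
    have h0 := (h 0 σ le_rfl hΛ.le hσ).1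
    simp only [add_zero] at h0
    have : min (σ * Δt) (σ * Δt) = σ * Δt := min_self _
    rw [this] at h0
    have : σ * Δt ≤ min (σ * Δt) Λ := by linarith
    exact this.trans (min_le_right _ _)
  · intro hσΛ lam δ hl hlΛ hδ
    have hx : 0 ≤ δ * Δt + lam := by positivity
    constructor
    · have : min (δ * Δt + lam) (σ * Δt) ≤ min (δ * Δt + lam) Λ :=
        min_le_min le_rfl hσΛ
      linarith
    · have h1 : min (δ * Δt + lam) Λ ≤ Λ := min_le_right _ _
      have h2 : 0 ≤ min (δ * Δt + lam) (σ * Δt) := le_min hx (by positivity)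
      linarith
end

section
/- For the discrete point queue model update λ' = min{δΔt+λ, σΔt+Λ} − min{λ, σΔt} (PQM4-D), the update maps [0,Λ] into [0,Λ] for all λ ∈ [0,Λ] and all σ ≥ 0 if and only if δΔt ≤ Λ. -/
/-- PQM4-D is well-defined iff δΔt ≤ Λ. -/
theorem stmt_4 (Λ δ Δt : ℝ) (hΛ : 0 < Λ) (hδ : 0 ≤ δ) (hΔt : 0 < Δt) :
    (∀ lam σ : ℝ, 0 ≤ lam → lam ≤ Λ → 0 ≤ σ →
      0 ≤ min (δ * Δt + lam) (σ * Δt + Λ) - min lam (σ * Δt) ∧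
      min (δ * Δt + lam) (σ * Δt + Λ) - min lam (σ * Δt) ≤ Λ)
    ↔ δ * Δt ≤ Λ := by
  have hδΔ : 0 ≤ δ * Δt := mul_nonneg hδ hΔt.le
  constructor
  · intro h
    have := (h 0 δ le_rfl hΛ.le hδ).2
    have hmin : min (δ * Δt + 0) (δ * Δt + Λ) = δ * Δt := by
      rw [add_zero]; exact min_eq_left (by linarith)
    rw [hmin] at this
    rw [min_eq_left hδΔ] at this; linarith
  · intro h lam σ h0 hle hσ
    have hσΔ : 0 ≤ σ * Δt := mul_nonneg hσ hΔt.le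
    constructor
    · have : min lam (σ * Δt) ≤ min (δ * Δt + lam) (σ * Δt + Λ) :=
        min_le_min (by linarith) (by linarith)
      linarith
    · rcases le_total lam (σ * Δt) with hc | hc
      · rw [min_eq_left hc]
        have := min_le_left (δ * Δt + lam) (σ * Δt + Λ)
        linarith
      · rw [min_eq_right hc]
        have := min_le_right (δ * Δt + lam) (σ * Δt + Λ)
        linarith
end

section
/- Let λ(t) solve the Vickrey point queue with constant supply σ > 0: λ(t) = F(t) − G(t) where G(t) = min_{0≤τ≤t}{F(τ)−στ} + σt, F continuous nondecreasing, F(0)=0. Then F(t) = G(t + λ(t)/σ) for all t ≥ 0; i.e., a vehicle entering the queue at time t experiences queueing time π(t) = λ(t)/σ. -/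
/-!
Write `f τ = F τ - σ τ` and `m = inf_{[0,t]} f`, so that `G t = m + σ t` and the queue length is
`λ = f t - m ≥ 0`. Over `[t, t + λ/σ]` the monotonicity of `F` gives
`f τ ≥ F t - σ (t + λ/σ) = m`, so the running infimum does not move on that interval, and
`G (t + λ/σ) = m + σ t + λ = F t`.
-/

open Set

theorem csInf_image_Icc_eq_of_le_on_Icc {α β : Type*} [LinearOrder α]
    [ConditionallyCompleteLinearOrder β] {f : α → β} {a b c : α} (hab : a ≤ b) (hbc : b ≤ c)
    (hbdd : BddBelow (f '' Icc a b)) (h : ∀ τ ∈ Icc b c, sInf (f '' Icc a b) ≤ f τ) :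
    sInf (f '' Icc a c) = sInf (f '' Icc a b) := by
  have hne : (f '' Icc a b).Nonempty := ⟨f a, a, ⟨le_rfl, hab⟩, rfl⟩
  have hlb : sInf (f '' Icc a b) ∈ lowerBounds (f '' Icc a c) := by
    rintro _ ⟨τ, ⟨haτ, hτc⟩, rfl⟩
    rcases le_total τ b with hτb | hbτ
    · exact csInf_le hbdd ⟨τ, ⟨haτ, hτb⟩, rfl⟩
    · exact h τ ⟨hbτ, hτc⟩
  exact le_antisymm
    (csInf_le_csInf ⟨_, hlb⟩ hne (image_mono (Icc_subset_Icc_right hbc)))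
    (le_csInf (hne.mono (image_mono (Icc_subset_Icc_right hbc))) hlb)

theorem Monotone.bddBelow_image_Icc_sub_mul {F : ℝ → ℝ} (hF : Monotone F) {σ : ℝ} (hσ : 0 ≤ σ)
    (a b : ℝ) : BddBelow ((fun τ => F τ - σ * τ) '' Icc a b) := by
  refine ⟨F a - σ * b, ?_⟩
  rintro _ ⟨τ, ⟨haτ, hτb⟩, rfl⟩
  have := mul_le_mul_of_nonneg_left hτb hσ
  linarith [hF haτ]

theorem stmt_9_general (F G : ℝ → ℝ) (σ : ℝ) (hσ : 0 < σ)
    (hFmono : Monotone F)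
    (hG : ∀ t, 0 ≤ t →
      G t = sInf ((fun τ => F τ - σ * τ) '' Set.Icc 0 t) + σ * t) :
    ∀ t, 0 ≤ t → F t = G (t + (F t - G t) / σ) := by
  intro t ht
  set f : ℝ → ℝ := fun τ => F τ - σ * τ
  set m := sInf (f '' Icc 0 t)
  have hbdd := hFmono.bddBelow_image_Icc_sub_mul hσ.le 0 t
  have hqueue : F t - G t = f t - m := by rw [hG t ht]; ring
  have hqueue_nonneg : 0 ≤ f t - m := sub_nonneg.2 (csInf_le hbdd ⟨t, ⟨ht, le_rfl⟩, rfl⟩)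
  rw [hqueue]
  set t' := t + (f t - m) / σ
  have hσt' : σ * t' = F t - m := by simp only [t', f]; field_simp; ring
  have htt' : t ≤ t' := le_add_of_nonneg_right (div_nonneg hqueue_nonneg hσ.le)
  have hinf : sInf (f '' Icc 0 t') = m := by
    refine csInf_image_Icc_eq_of_le_on_Icc ht htt' hbdd fun τ ⟨htτ, hτt'⟩ => ?_
    have := mul_le_mul_of_nonneg_left hτt' hσ.le
    simp only [f]
    linarith [hFmono htτ]
  rw [hG t' (ht.trans htt'), hinf, hσt']
  ring

/-- Vickrey point queue with constant supply: queueing time is λ(t)/σ, i.e. F(t) = G(t + λ(t)/σ). -/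
theorem stmt_9 (F G : ℝ → ℝ) (σ : ℝ) (hσ : 0 < σ)
    (hF0 : F 0 = 0) (hFmono : Monotone F) (hFcont : Continuous F)
    (hG : ∀ t, 0 ≤ t →
      G t = sInf ((fun τ => F τ - σ * τ) '' Set.Icc 0 t) + σ * t) :
    ∀ t, 0 ≤ t → F t = G (t + (F t - G t) / σ) :=
  stmt_9_general F G σ hσ hFmono hG
end

section
/- In the Vickrey point queue with constant supply σ, for every t where the out-flux g(t) = G'(t) exists, the complementarity condition (g(t) − σ)·λ(t) = 0 holds; equivalently, g(t) = σ whenever λ(t) > 0. -/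
/-- Complementarity condition (g(t) − σ)·λ(t) = 0 for the Vickrey point queue. -/
theorem stmt_10 (F G : ℝ → ℝ) (σ : ℝ) (hσ : 0 < σ)
    (hF0 : F 0 = 0) (hFmono : Monotone F) (hFsmooth : ContDiff ℝ 1 F)
    (hG : ∀ t, 0 ≤ t →
      G t = sInf ((fun τ => F τ - σ * τ) '' Set.Icc 0 t) + σ * t) :
    ∀ t, 0 ≤ t → ∀ g : ℝ, HasDerivAt G g t → (g - σ) * (F t - G t) = 0 := by
  intro t ht g hg
  set f : ℝ → ℝ := fun τ => F τ - σ * τ with hf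
  have hfc : Continuous f := hFsmooth.continuous.sub (continuous_const.mul continuous_id)
  by_cases hlz : F t - G t = 0
  · rw [hlz, mul_zero]
  · -- t must be positive
    rcases eq_or_lt_of_le ht with h0 | htpos
    · exfalso
      apply hlz
      have h' := hG t ht
      rw [← h0] at h' ⊢
      rw [Set.Icc_self, Set.image_singleton, csInf_singleton] at h'
      simp only [hf, hF0, mul_zero, sub_zero, add_zero] at h'
      rw [h', hF0, sub_zero]
    -- setup: compact image, min attained
    have hne : (f '' Set.Icc 0 t).Nonempty := ⟨f 0, ⟨0, Set.mem_Icc.mpr ⟨le_rfl, ht⟩, rfl⟩⟩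
    have hcpt : IsCompact (f '' Set.Icc 0 t) := (isCompact_Icc).image hfc
    set m := sInf (f '' Set.Icc 0 t) with hm
    have hmem : m ∈ f '' Set.Icc 0 t := hcpt.sInf_mem hne
    have hble : BddBelow (f '' Set.Icc 0 t) := hcpt.bddBelow
    have hmle : m ≤ f t := csInf_le hble ⟨t, Set.mem_Icc.mpr ⟨ht, le_rfl⟩, rfl⟩
    have hGt : G t = m + σ * t := hG t ht
    have hlam : F t - G t = f t - m := by rw [hGt]; ring
    have hmlt : m < f t := by
      rcases lt_or_eq_of_le hmle with h | h
      · exact h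
      · exfalso; exact hlz (by rw [hlam, ← h]; ring)
    -- continuity: f > m near t
    have hopen : ∀ᶠ s in nhds t, m < f s := hfc.continuousAt.eventually (eventually_gt_nhds hmlt)
    obtain ⟨δ, hδpos, hδ⟩ := Metric.eventually_nhds_iff.mp hopen
    set ε := min δ t with hε
    have hεpos : 0 < ε := lt_min hδpos htpos
    -- local constancy of the inf
    have hloc : ∀ s, |s - t| < ε → G s = m + σ * s := by
      intro s hs
      have hsδ : |s - t| < δ := lt_of_lt_of_le hs (min_le_left _ _)
      have hst : t - ε < s ∧ s < t + ε := abs_sub_lt_iff.mp hs |>.symm |>.imp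
        (fun h => by linarith) (fun h => by linarith)
      have hspos : 0 < s := by
        have : ε ≤ t := min_le_right _ _
        linarith [hst.1]
      have hGs : G s = sInf (f '' Set.Icc 0 s) + σ * s := hG s hspos.le
      have hnes : (f '' Set.Icc 0 s).Nonempty :=
        ⟨f 0, ⟨0, Set.mem_Icc.mpr ⟨le_rfl, hspos.le⟩, rfl⟩⟩
      have hcpts : IsCompact (f '' Set.Icc 0 s) := (isCompact_Icc).image hfc
      have hbles : BddBelow (f '' Set.Icc 0 s) := hcpts.bddBelow
      have : sInf (f '' Set.Icc 0 s) = m := by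
        rcases le_total s t with hle | hge
        · -- Icc 0 s ⊆ Icc 0 t : sInf over smaller ≥ m; minimizer τ* of big in small
          obtain ⟨τ, hτmem, hτval⟩ := hmem
          have hτs : τ ≤ s := by
            by_contra hc
            push_neg at hc
            have h1 : |τ - t| < δ := by
              rw [abs_sub_lt_iff]
              constructor
              · linarith [hτmem.2]
              · have : t - ε < s := hst.1
                have : ε ≤ δ := min_le_left _ _
                linarith
            have := hδ h1
            rw [hτval] at this
            exact lt_irrefl m this
          apply le_antisymm
          · exact hτval ▸ csInf_le hbles ⟨τ, Set.mem_Icc.mpr ⟨hτmem.1, hτs⟩, rfl⟩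
          · exact le_csInf hnes (fun x ⟨u, hu, hux⟩ => hux ▸ csInf_le hble
              ⟨u, Set.mem_Icc.mpr ⟨hu.1, hu.2.trans hle⟩, rfl⟩)
        · -- t ≤ s : minimizer σ* of the big interval must lie in [0,t]
          obtain ⟨τ, hτmem, hτval⟩ := hcpts.sInf_mem hnes
          have hsInf_le : sInf (f '' Set.Icc 0 s) ≤ m := by
            obtain ⟨u, hu, huv⟩ := hmem
            exact huv ▸ csInf_le hbles ⟨u, Set.mem_Icc.mpr ⟨hu.1, hu.2.trans hge⟩, rfl⟩
          apply le_antisymm hsInf_le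
          rcases le_total τ t with hτt | htτ
          · exact hτval ▸ csInf_le hble ⟨τ, Set.mem_Icc.mpr ⟨hτmem.1, hτt⟩, rfl⟩
          · exfalso
            have h1 : |τ - t| < δ := by
              rw [abs_sub_lt_iff]
              constructor
              · have : s < t + ε := hst.2
                have : ε ≤ δ := min_le_left _ _
                linarith [hτmem.2]
              · linarith
            have := hδ h1
            rw [hτval] at this
            linarith
      rw [hGs, this]
    -- G agrees with affine function near t, so g = σ
    have heq : G =ᶠ[nhds t] fun s => m + σ * s := by
      filter_upwards [Metric.ball_mem_nhds t hεpos] with s hs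
      exact hloc s (by simpa [Real.dist_eq] using hs)
    have haff : HasDerivAt (fun s : ℝ => m + σ * s) σ t := by
      simpa using ((hasDerivAt_id t).const_mul σ).const_add m
    have : g = σ := hg.unique (haff.congr_of_eventuallyEq heq)
    rw [this, sub_self, zero_mul]
end

section
/- Consider the scalar ODE dλ/dt = min{δ, σ + (Λ−λ)/ε} − min{δ + λ/ε, σ} (ε-PQM1) with constants δ, σ ≥ 0, Λ > 0, ε > 0. If λ(0) ∈ [0,Λ], then λ(t) ∈ [0,Λ] for all t ≥ 0 (the model is well-defined for any ε). -/
/-- If `g 0 ≥ 0` and the derivative of `g` is nonnegative whenever `g ≤ 0`,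
then `g` stays nonnegative for `t ≥ 0`. -/
lemma aux_nonneg (g g' : ℝ → ℝ) (hg : ∀ t, HasDerivAt g (g' t) t)
    (hK : ∀ t, g t ≤ 0 → 0 ≤ g' t) (h0 : 0 ≤ g 0) :
    ∀ t, 0 ≤ t → 0 ≤ g t := by
  intro t0 ht0
  by_contra hneg
  push_neg at hneg
  have hdiff : Differentiable ℝ g := fun t => (hg t).differentiableAt
  have hcont : Continuous g := hdiff.continuous
  set S : Set ℝ := Set.Icc 0 t0 ∩ g ⁻¹' Set.Ici 0 with hS
  have hSne : S.Nonempty := ⟨0, ⟨le_refl 0, ht0⟩, h0⟩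
  have hSbdd : BddAbove S := ⟨t0, fun x hx => hx.1.2⟩
  have hSclosed : IsClosed S :=
    (isClosed_Icc).inter (isClosed_Ici.preimage hcont)
  set s := sSup S with hs
  have hsS : s ∈ S := hSclosed.csSup_mem hSne hSbdd
  have hst0 : s ≤ t0 := hsS.1.2
  have hgs : 0 ≤ g s := hsS.2
  have hslt : s < t0 := lt_of_le_of_ne hst0 (fun h => absurd (h ▸ hgs) (not_le.mpr hneg))
  -- On (s, t0], g < 0, hence g' ≥ 0 on (s, t0).
  have hneg' : ∀ x, s < x → x ≤ t0 → g x < 0 := by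
    intro x hsx hxt0
    by_contra h
    push_neg at h
    have : x ∈ S := ⟨⟨le_trans hsS.1.1 hsx.le, hxt0⟩, h⟩
    exact absurd (le_csSup hSbdd this) (not_le.mpr hsx)
  have hmono : MonotoneOn g (Set.Icc s t0) := by
    apply monotoneOn_of_deriv_nonneg (convex_Icc s t0) hcont.continuousOn
      (hdiff.differentiableOn)
    intro x hx
    rw [interior_Icc] at hx
    rw [(hg x).deriv]
    exact hK x (hneg' x hx.1 hx.2.le).le
  have := hmono ⟨le_refl s, hst0⟩ ⟨hst0, le_refl t0⟩ hst0
  linarith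

/-- The ε-PQM1 ODE keeps the queue length in [0,Λ]. -/
theorem stmt_11 (δ σ Λ ε : ℝ) (hδ : 0 ≤ δ) (hσ : 0 ≤ σ) (hΛ : 0 < Λ) (hε : 0 < ε)
    (lam : ℝ → ℝ)
    (hode : ∀ t : ℝ, HasDerivAt lam
      (min δ (σ + (Λ - lam t) / ε) - min (δ + lam t / ε) σ) t)
    (hinit : lam 0 ∈ Set.Icc 0 Λ) :
    ∀ t, 0 ≤ t → lam t ∈ Set.Icc 0 Λ := by
  intro t ht
  constructor
  · -- lower bound
    refine aux_nonneg lam _ hode ?_ hinit.1 t ht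
    intro u hu
    have h1 : min δ σ ≤ min δ (σ + (Λ - lam u) / ε) := by
      apply le_min (min_le_left _ _)
      have : (0:ℝ) ≤ (Λ - lam u) / ε := div_nonneg (by linarith) hε.le
      calc min δ σ ≤ σ := min_le_right _ _
        _ ≤ σ + (Λ - lam u) / ε := by linarith
    have h2 : min (δ + lam u / ε) σ ≤ min δ σ := by
      apply min_le_min _ le_rfl
      have : lam u / ε ≤ 0 := div_nonpos_of_nonpos_of_nonneg hu hε.le
      linarith
    linarith
  · -- upper bound
    have := aux_nonneg (fun t => Λ - lam t)
      (fun t => -(min δ (σ + (Λ - lam t) / ε) - min (δ + lam t / ε) σ))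
      (fun t => ((hasDerivAt_const t Λ).sub (hode t)).congr_deriv (by ring))
      ?_ (by simpa [sub_nonneg] using hinit.2) t ht
    · simpa using this
    · intro u hu
      simp only [sub_nonpos] at hu
      have h1 : min δ (σ + (Λ - lam u) / ε) ≤ min δ σ := by
        apply min_le_min le_rfl
        have : (Λ - lam u) / ε ≤ 0 := div_nonpos_of_nonpos_of_nonneg (by linarith) hε.le
        linarith
      have h2 : min δ σ ≤ min (δ + lam u / ε) σ := by
        apply le_min _ (min_le_right _ _)
        have : (0:ℝ) ≤ lam u / ε := div_nonneg (by linarith) hε.le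
        calc min δ σ ≤ δ := min_le_left _ _
          _ ≤ δ + lam u / ε := by linarith
      linarith
end

section
/- The stationary states λ ∈ [0,Λ] of ε-PQM2 (in-flux min{δ, (Λ−λ)/ε} equals out-flux min{λ/ε, σ}) are: λ = Λ − εσ if δ > σ; λ = εδ if δ < σ; any λ ∈ [εδ, Λ−εσ] if δ = σ, provided ε(δ+σ) ≤ Λ. -/
/-!
Dividing by `ε` reduces everything to the normalized occupancy `x = λ/ε` in a queue of capacity
`L = Λ/ε ≥ δ + σ`, where the balance reads `min δ (L - x) = min x σ`. If `σ < δ`, the common value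
is below `δ`, so it is the supply `L - x`; it cannot also be the demand `x`, since then `x = L/2 ≥ σ`,
so it is `σ` and `x = L - σ`. The reflection `x ↦ L - x` exchanges `δ` and `σ` and gives the case
`δ < σ`. If `δ = σ` the same comparison with `L/2` shows the balance holds exactly on `[δ, L - δ]`.
-/

namespace PointQueue

theorem min_sub_eq_min_iff_of_lt {δ σ L x : ℝ} (hlt : σ < δ) (hL : δ + σ ≤ L) :
    min δ (L - x) = min x σ ↔ x = L - σ := by
  constructor
  · intro h
    rcases le_total δ (L - x) with h₁ | h₁ <;> rcases le_total x σ with h₂ | h₂ <;>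
      simp only [min_eq_left, min_eq_right, h₁, h₂] at h <;> linarith
  · rintro rfl
    rw [sub_sub_cancel, min_eq_right hlt.le, min_eq_right (by linarith)]

theorem min_sub_eq_min_iff_of_gt {δ σ L x : ℝ} (hlt : δ < σ) (hL : δ + σ ≤ L) :
    min δ (L - x) = min x σ ↔ x = δ := by
  have reflected := min_sub_eq_min_iff_of_lt (x := L - x) hlt (by linarith : σ + δ ≤ L)
  rwa [sub_sub_cancel, sub_right_inj, min_comm σ, min_comm _ δ, eq_comm] at reflected

theorem min_sub_eq_min_self_iff {δ L x : ℝ} (hL : 2 * δ ≤ L) :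
    min δ (L - x) = min x δ ↔ x ∈ Set.Icc δ (L - δ) := by
  constructor
  · intro h
    rcases le_total δ (L - x) with h₁ | h₁ <;> rcases le_total x δ with h₂ | h₂ <;>
      simp only [min_eq_left, min_eq_right, h₁, h₂] at h <;> constructor <;> linarith
  · rintro ⟨h₁, h₂⟩
    rw [min_eq_left (by linarith), min_eq_right h₁]

end PointQueue

open PointQueue in
theorem stmt_13_general (δ σ Λ ε : ℝ) (hε : 0 < ε)
    (hcond : ε * (δ + σ) ≤ Λ) :
    ∀ lam ∈ Set.Icc (0 : ℝ) Λ,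
      (σ < δ → (min δ ((Λ - lam) / ε) = min (lam / ε) σ ↔ lam = Λ - ε * σ)) ∧
      (δ < σ → (min δ ((Λ - lam) / ε) = min (lam / ε) σ ↔ lam = ε * δ)) ∧
      (δ = σ → (min δ ((Λ - lam) / ε) = min (lam / ε) σ ↔
        lam ∈ Set.Icc (ε * δ) (Λ - ε * σ))) := by
  intro lam _
  have hL : δ + σ ≤ Λ / ε := by rw [le_div_iff₀ hε]; linarith
  have rescale : ∀ c, lam = c ↔ lam / ε = c / ε := fun c => (div_left_inj' hε.ne').symm
  rw [sub_div]
  refine ⟨fun hlt => ?_, fun hlt => ?_, fun heq => ?_⟩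
  · rw [min_sub_eq_min_iff_of_lt hlt hL, rescale, sub_div, mul_div_cancel_left₀ _ hε.ne']
  · rw [min_sub_eq_min_iff_of_gt hlt hL, rescale, mul_div_cancel_left₀ _ hε.ne']
  · subst heq
    rw [min_sub_eq_min_self_iff (by linarith), Set.mem_Icc, Set.mem_Icc, le_div_iff₀ hε,
      le_sub_iff_add_le, div_add' _ _ _ hε.ne', div_le_iff₀ hε, mul_comm δ ε, ← le_sub_iff_add_le,
      div_mul_cancel₀ _ hε.ne']

/-- Stationary states of ε-PQM2. -/
theorem stmt_13 (δ σ Λ ε : ℝ) (hδ : 0 ≤ δ) (hσ : 0 ≤ σ) (hΛ : 0 < Λ) (hε : 0 < ε)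
    (hcond : ε * (δ + σ) ≤ Λ) :
    ∀ lam ∈ Set.Icc (0 : ℝ) Λ,
      (σ < δ → (min δ ((Λ - lam) / ε) = min (lam / ε) σ ↔ lam = Λ - ε * σ)) ∧
      (δ < σ → (min δ ((Λ - lam) / ε) = min (lam / ε) σ ↔ lam = ε * δ)) ∧
      (δ = σ → (min δ ((Λ - lam) / ε) = min (lam / ε) σ ↔
        lam ∈ Set.Icc (ε * δ) (Λ - ε * σ))) :=
  stmt_13_general δ σ Λ ε hε hcond
end

section
/- The stationary states of ε-PQM3 (in-flux min{δ, (Λ−λ)/ε} equals out-flux min{δ + λ/ε, σ}) are: λ = Λ − εσ if δ > σ; λ = 0 if δ < σ; any λ ∈ [0, Λ−εσ] if δ = σ, provided εσ ≤ Λ. -/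
/-!
With `0 ≤ λ`, the demand `δ + λ/ε` never falls below `δ`, so the out-flux is `σ` when `σ ≤ δ`
and the equation reduces to a condition on the supply `(Λ - λ)/ε`. When `δ < σ` the in-flux is at
most `δ` while the out-flux exceeds `δ` as soon as `λ > 0`, which forces `λ = 0`; the condition
`εσ ≤ Λ` makes `λ = 0` stationary.
-/

theorem min_eq_iff_of_lt_left {α : Type*} [LinearOrder α] {a b c : α} (h : c < a) :
    min a b = c ↔ b = c := by
  refine ⟨fun hm => ?_, fun hb => hb ▸ min_eq_right (hb ▸ h).le⟩
  rcases min_choice a b with ha | hb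
  · exact absurd (ha ▸ hm) h.ne'
  · exact hb ▸ hm

namespace PQM3

variable {δ σ Λ ε lam : ℝ}

theorem outFlux_eq_of_le (hε : 0 < ε) (hlam : 0 ≤ lam) (h : σ ≤ δ) :
    min (δ + lam / ε) σ = σ :=
  min_eq_right (by linarith [div_nonneg hlam hε.le])

theorem le_supply_iff (hε : 0 < ε) : δ ≤ (Λ - lam) / ε ↔ lam ≤ Λ - ε * δ := by
  rw [le_div_iff₀ hε]
  constructor <;> intro <;> linarith

theorem supply_eq_iff (hε : ε ≠ 0) : (Λ - lam) / ε = σ ↔ lam = Λ - ε * σ := by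
  rw [div_eq_iff hε]
  constructor <;> intro <;> linarith

theorem stationary_iff_of_lt (hε : 0 < ε) (hlam : 0 ≤ lam) (hσδ : σ < δ) :
    min δ ((Λ - lam) / ε) = min (δ + lam / ε) σ ↔ lam = Λ - ε * σ := by
  rw [outFlux_eq_of_le hε hlam hσδ.le, min_eq_iff_of_lt_left hσδ, supply_eq_iff hε.ne']

theorem stationary_iff_of_gt (hε : 0 < ε) (hlam : 0 ≤ lam) (hcond : ε * σ ≤ Λ) (hδσ : δ < σ) :
    min δ ((Λ - lam) / ε) = min (δ + lam / ε) σ ↔ lam = 0 := by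
  constructor
  · intro h
    have hout : min (δ + lam / ε) σ ≤ δ := h ▸ min_le_left _ _
    have hdemand : δ + lam / ε ≤ δ := by
      rcases min_le_iff.mp hout with h' | h'
      · exact h'
      · exact absurd h' hδσ.not_ge
    have : lam / ε ≤ 0 := by linarith
    exact le_antisymm (by simpa using (div_le_iff₀ hε).mp this) hlam
  · rintro rfl
    have hsupply : δ ≤ (Λ - 0) / ε :=
      le_supply_iff hε |>.mpr (by linarith [mul_lt_mul_of_pos_left hδσ hε])
    rw [min_eq_left hsupply, zero_div, add_zero, min_eq_left hδσ.le]

theorem stationary_iff_of_eq (hε : 0 < ε) (hlam : 0 ≤ lam) :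
    min σ ((Λ - lam) / ε) = min (σ + lam / ε) σ ↔ lam ∈ Set.Icc 0 (Λ - ε * σ) := by
  rw [outFlux_eq_of_le hε hlam le_rfl, min_eq_left_iff, le_supply_iff hε]
  exact ⟨fun h => ⟨hlam, h⟩, And.right⟩

end PQM3

theorem stmt_14_general (δ σ Λ ε : ℝ) (hε : 0 < ε)
    (hcond : ε * σ ≤ Λ) :
    ∀ lam ∈ Set.Icc (0 : ℝ) Λ,
      (σ < δ → (min δ ((Λ - lam) / ε) = min (δ + lam / ε) σ ↔ lam = Λ - ε * σ)) ∧
      (δ < σ → (min δ ((Λ - lam) / ε) = min (δ + lam / ε) σ ↔ lam = 0)) ∧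
      (δ = σ → (min δ ((Λ - lam) / ε) = min (δ + lam / ε) σ ↔
        lam ∈ Set.Icc 0 (Λ - ε * σ))) := by
  rintro lam ⟨hlam, -⟩
  refine ⟨PQM3.stationary_iff_of_lt hε hlam, PQM3.stationary_iff_of_gt hε hlam hcond, ?_⟩
  rintro rfl
  exact PQM3.stationary_iff_of_eq hε hlam

/-- Stationary states of ε-PQM3. -/
theorem stmt_14 (δ σ Λ ε : ℝ) (hδ : 0 ≤ δ) (hσ : 0 ≤ σ) (hΛ : 0 < Λ) (hε : 0 < ε)
    (hcond : ε * σ ≤ Λ) :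
    ∀ lam ∈ Set.Icc (0 : ℝ) Λ,
      (σ < δ → (min δ ((Λ - lam) / ε) = min (δ + lam / ε) σ ↔ lam = Λ - ε * σ)) ∧
      (δ < σ → (min δ ((Λ - lam) / ε) = min (δ + lam / ε) σ ↔ lam = 0)) ∧
      (δ = σ → (min δ ((Λ - lam) / ε) = min (δ + lam / ε) σ ↔
        lam ∈ Set.Icc 0 (Λ - ε * σ))) :=
  stmt_14_general δ σ Λ ε hε hcond
end

section
/- If λ₁, λ₂ ∈ [0,Λ] with Λ > 0 and we apply the PQM1-D update λᵢ' = min{δΔt+λᵢ, σΔt+Λ} − min{δΔt+λᵢ, σΔt}, then |λ₁' − λ₂'| ≤ |λ₁ − λ₂| (the update is nonexpansive in the queue length). -/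
set_option maxHeartbeats 2000000 in
/-- The PQM1-D update is nonexpansive in the queue length. -/
theorem stmt_18 (Λ δ σ Δt lam₁ lam₂ : ℝ) (hΛ : 0 < Λ)
    (h₁0 : 0 ≤ lam₁) (h₁Λ : lam₁ ≤ Λ) (h₂0 : 0 ≤ lam₂) (h₂Λ : lam₂ ≤ Λ)
    (hδ : 0 ≤ δ) (hσ : 0 ≤ σ) (hΔt : 0 < Δt) :
    |(min (δ * Δt + lam₁) (σ * Δt + Λ) - min (δ * Δt + lam₁) (σ * Δt)) -
      (min (δ * Δt + lam₂) (σ * Δt + Λ) - min (δ * Δt + lam₂) (σ * Δt))| ≤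
      |lam₁ - lam₂| := by
  rcases le_total (δ * Δt + lam₁) (σ * Δt + Λ) with h1 | h1 <;>
  rcases le_total (δ * Δt + lam₁) (σ * Δt) with h2 | h2 <;>
  rcases le_total (δ * Δt + lam₂) (σ * Δt + Λ) with h3 | h3 <;>
  rcases le_total (δ * Δt + lam₂) (σ * Δt) with h4 | h4 <;>
  simp [min_eq_left, min_eq_right, h1, h2, h3, h4, abs_le] <;>
  constructor <;>
  nlinarith [le_abs_self (lam₁ - lam₂), neg_abs_le (lam₁ - lam₂), abs_nonneg (lam₁ - lam₂)]
end

section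
/- In the tandem of two point queues where queue 1 has infinite storage and queue 2 has storage Λ₂, with updates λ₁' = λ₁ + δΔt − min{δΔt+λ₁, σΔt+Λ₂−λ₂} and λ₂' = λ₂ + min{δΔt+λ₁, σΔt+Λ₂−λ₂} − min{δΔt+λ₁+λ₂, σΔt}, if λ₁ ≥ 0, 0 ≤ λ₂ ≤ Λ₂, δ, σ ≥ 0, and σΔt ≤ Λ₂, then λ₁' ≥ 0 and 0 ≤ λ₂' ≤ Λ₂, and the total λ₁' + λ₂' = λ₁ + λ₂ + δΔt − min{δΔt+λ₁+λ₂, σΔt}. -/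
/-- Tandem of two point queues: well-definedness and flow conservation. -/
theorem stmt_19 (Λ₂ lam₁ lam₂ δ σ Δt : ℝ) (hΛ₂ : 0 < Λ₂)
    (h₁ : 0 ≤ lam₁) (h₂0 : 0 ≤ lam₂) (h₂Λ : lam₂ ≤ Λ₂)
    (hδ : 0 ≤ δ) (hσ : 0 ≤ σ) (hΔt : 0 < Δt) (hcond : σ * Δt ≤ Λ₂) :
    0 ≤ lam₁ + δ * Δt - min (δ * Δt + lam₁) (σ * Δt + Λ₂ - lam₂) ∧
    0 ≤ lam₂ + min (δ * Δt + lam₁) (σ * Δt + Λ₂ - lam₂) -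
        min (δ * Δt + lam₁ + lam₂) (σ * Δt) ∧
    lam₂ + min (δ * Δt + lam₁) (σ * Δt + Λ₂ - lam₂) -
        min (δ * Δt + lam₁ + lam₂) (σ * Δt) ≤ Λ₂ ∧
    (lam₁ + δ * Δt - min (δ * Δt + lam₁) (σ * Δt + Λ₂ - lam₂)) +
      (lam₂ + min (δ * Δt + lam₁) (σ * Δt + Λ₂ - lam₂) -
        min (δ * Δt + lam₁ + lam₂) (σ * Δt)) =
      lam₁ + lam₂ + δ * Δt - min (δ * Δt + lam₁ + lam₂) (σ * Δt) := by
  refine ⟨?_, ?_, ?_, ?_⟩ <;>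
  rcases le_total (δ * Δt + lam₁) (σ * Δt + Λ₂ - lam₂) with h1 | h1 <;>
  rcases le_total (δ * Δt + lam₁ + lam₂) (σ * Δt) with h2 | h2 <;>
  simp [min_def, h1, h2] <;>
  nlinarith [mul_nonneg hδ hΔt.le, mul_nonneg hσ hΔt.le]
end
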